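/- For all natural numbers $n$ and all integers $m$ with $-n\le m\le n$, the spherical harmonic $Y_n^m$ satisfies the uniform bound $\sup_{(\theta,\phi)} |Y_n^m(\theta,\phi)| \le \sqrt{\frac{n+1}{2\pi}}$. -/

import Mathlib

open Real Complex

/-- The Legendre polynomial `P_n` via the Rodrigues formula, as a function on `ℝ`. -/
noncomputable def legendreFn (n : ℕ) : ℝ → ℝ :=
  fun x => (1 / (2 ^ n * (n.factorial : ℝ))) *
    iteratedDeriv n (fun y : ℝ => (y ^ 2 - 1) ^ n) x

/-- The associated Legendre function `P_n^m` for `m ≥ 0`: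
`P_n^m(x) = (-1)^m (1-x^2)^{m/2} (d/dx)^m P_n(x)`. -/
noncomputable def assocLegendre (n m : ℕ) (x : ℝ) : ℝ :=
  (-1 : ℝ) ^ m * (1 - x ^ 2) ^ ((m : ℝ) / 2) * iteratedDeriv m (legendreFn n) x

/-- The associated Legendre function for integer order, using
`P_n^{-m} = (-1)^m ((n-m)!/(n+m)!) P_n^m`. -/
noncomputable def assocLegendreZ (n : ℕ) (m : ℤ) (x : ℝ) : ℝ :=
  if 0 ≤ m then assocLegendre n m.toNat x
  else (-1 : ℝ) ^ (-m).toNat *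
    (((n - (-m).toNat).factorial : ℝ) / ((n + (-m).toNat).factorial : ℝ)) *
    assocLegendre n (-m).toNat x

/-- The spherical harmonic
`Y_n^m(θ,φ) = √((2n+1)/(4π) ⋅ (n-m)!/(n+m)!) P_n^m(cos θ) e^{imφ}`. -/
noncomputable def sphericalHarmonic (n : ℕ) (m : ℤ) (θ φ : ℝ) : ℂ :=
  (Real.sqrt ((2 * n + 1) / (4 * Real.pi) *
      ((((n : ℤ) - m).toNat.factorial : ℝ) / (((n : ℤ) + m).toNat.factorial : ℝ))) : ℝ) *
    (assocLegendreZ n m (Real.cos θ) : ℂ) * Complex.exp (Complex.I * m * φ)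

/-! By Unsöld's theorem, `∑_{m=-n}^{n} (n-m)!/(n+m)! P_n^m(x)² = 1` on `[-1, 1]`. Pairing `±m`, the
sum is `P_n² + 2 ∑_{m=1}^{n} (n-m)!/(n+m)! (1-x²)^m (P_n^{(m)})²`; by the differentiated Legendre
equation its derivative telescopes to zero, and at `x = 1` it equals `P_n(1)² = 1`. Every term is
nonnegative, hence at most `1`, so `|Y_n^m|² ≤ (2n+1)/(4π) ≤ (n+1)/(2π)`. -/

open Polynomial Finset

theorem Polynomial.iteratedDeriv_eval {𝕜 : Type*} [NontriviallyNormedField 𝕜] (p : 𝕜[X])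
    (k : ℕ) : iteratedDeriv k (fun x => p.eval x) = fun x => (derivative^[k] p).eval x := by
  induction k with
  | zero => simp
  | succ k ih =>
    funext x
    rw [iteratedDeriv_succ, ih, Function.iterate_succ_apply']
    exact Polynomial.deriv _

section Rodrigues

variable {R : Type*} [CommRing R]

theorem sq_sub_one_mul_derivative_sq_sub_one_pow (n : ℕ) :
    ((X : R[X]) ^ 2 - 1) * derivative ((X ^ 2 - 1) ^ n) = 2 * (n : R[X]) * X * (X ^ 2 - 1) ^ n := by
  cases n with
  | zero => simp
  | succ n =>
    rw [derivative_pow]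
    simp only [Nat.add_sub_cancel, derivative_sub, derivative_one, derivative_X_pow, C_eq_natCast]
    push_cast
    ring

theorem sq_sub_one_mul_iterate_derivative_sq_sub_one_pow (n k : ℕ) :
    ((X : R[X]) ^ 2 - 1) * derivative^[k + 2] ((X ^ 2 - 1) ^ n) =
      (2 * (n : R[X]) - 2 * (k : R[X]) - 2) * X * derivative^[k + 1] ((X ^ 2 - 1) ^ n) +
        ((k : R[X]) + 1) * (2 * (n : R[X]) - (k : R[X])) * derivative^[k] ((X ^ 2 - 1) ^ n) := by
  induction k with
  | zero =>
    have h := congrArg derivative (sq_sub_one_mul_derivative_sq_sub_one_pow (R := R) n)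
    simp only [derivative_mul, derivative_sub, derivative_one, derivative_X_pow, derivative_X,
      derivative_natCast, derivative_ofNat, C_eq_natCast] at h
    simp only [Function.iterate_succ_apply', Function.iterate_zero_apply]
    push_cast at h ⊢
    linear_combination h
  | succ k ih =>
    have h := congrArg derivative ih
    simp only [derivative_mul, derivative_sub, derivative_add, derivative_one, derivative_X_pow,
      derivative_X, derivative_natCast, derivative_ofNat, C_eq_natCast] at h
    simp only [Function.iterate_succ_apply'] at h ⊢
    push_cast at h ⊢
    linear_combination h

end Rodrigues

noncomputable def legendrePoly (n : ℕ) : ℝ[X] :=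
  C (1 / (2 ^ n * (n.factorial : ℝ))) * derivative^[n] ((X ^ 2 - 1) ^ n)

theorem iterate_derivative_legendrePoly (n m : ℕ) :
    derivative^[m] (legendrePoly n) =
      C (1 / (2 ^ n * (n.factorial : ℝ))) * derivative^[n + m] ((X ^ 2 - 1) ^ n) := by
  rw [legendrePoly, iterate_derivative_C_mul, Nat.add_comm, Function.iterate_add_apply]

/-- The `m`-th derivative of the general Legendre equation. -/
theorem one_sub_sq_mul_iterate_derivative_legendrePoly (n m : ℕ) :
    (1 - (X : ℝ[X]) ^ 2) * derivative^[m + 2] (legendrePoly n) =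
      (2 * (m : ℝ[X]) + 2) * X * derivative^[m + 1] (legendrePoly n) -
        ((n : ℝ[X]) + (m : ℝ[X]) + 1) * ((n : ℝ[X]) - (m : ℝ[X])) * derivative^[m] (legendrePoly n) := by
  have h := sq_sub_one_mul_iterate_derivative_sq_sub_one_pow (R := ℝ) n (n + m)
  simp only [iterate_derivative_legendrePoly, ← add_assoc]
  push_cast at h ⊢
  linear_combination (-C (1 / (2 ^ n * (n.factorial : ℝ)))) * h

theorem natDegree_legendrePoly_le (n : ℕ) : (legendrePoly n).natDegree ≤ n := by
  have hW : (((X : ℝ[X]) ^ 2 - 1) ^ n).natDegree ≤ 2 * n := by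
    refine natDegree_pow_le_of_le n ?_ |>.trans_eq (mul_comm _ _)
    exact (natDegree_sub_le _ _).trans (by simp)
  calc (legendrePoly n).natDegree
      ≤ (derivative^[n] (((X : ℝ[X]) ^ 2 - 1) ^ n)).natDegree := natDegree_C_mul_le _ _
    _ ≤ (((X : ℝ[X]) ^ 2 - 1) ^ n).natDegree - n := natDegree_iterate_derivative _ _
    _ ≤ n := by omega

theorem iterate_derivative_legendrePoly_eq_zero (n : ℕ) :
    derivative^[n + 1] (legendrePoly n) = 0 :=
  iterate_derivative_eq_zero (Nat.lt_succ_of_le (natDegree_legendrePoly_le n))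

theorem legendrePoly_eval_one (n : ℕ) : (legendrePoly n).eval 1 = 1 := by
  have hfactor : ((X : ℝ[X]) ^ 2 - 1) ^ n = (X + 1) ^ n * (X - C 1) ^ n := by
    rw [← mul_pow, C_1]; ring
  -- by Leibniz, only the term where all `n` derivatives hit `(X - 1) ^ n` survives at `1`
  have hderiv : (derivative^[n] (((X : ℝ[X]) ^ 2 - 1) ^ n)).eval 1 = 2 ^ n * (n.factorial : ℝ) := by
    rw [hfactor, iterate_derivative_mul, eval_finsetSum,
      Finset.sum_eq_single_of_mem n (self_mem_range_succ n)]
    · simp only [Nat.choose_self, one_smul, Nat.sub_self, Function.iterate_zero, id_eq,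
        iterate_derivative_X_sub_pow_self, eval_mul, eval_pow, eval_add, eval_X, eval_one,
        eval_natCast]
      norm_num
    · intro k hk hkn
      have hnk : n - k ≠ 0 := by
        have := mem_range.1 hk
        omega
      rw [iterate_derivative_X_sub_pow]
      simp [zero_pow hnk]
  rw [legendrePoly, eval_mul, eval_C, hderiv]
  field_simp

noncomputable def legendreWeight (n m : ℕ) : ℝ := ((n - m).factorial : ℝ) / ((n + m).factorial : ℝ)

theorem legendreWeight_zero (n : ℕ) : legendreWeight n 0 = 1 :=
  div_self (by positivity)

theorem legendreWeight_succ_mul {n m : ℕ} (h : m < n) :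
    legendreWeight n (m + 1) * (((n : ℝ) + m + 1) * ((n : ℝ) - m)) = legendreWeight n m := by
  have hsub : n - m = (n - (m + 1)) + 1 := by omega
  have hcast : ((n - (m + 1) : ℕ) : ℝ) + 1 = (n : ℝ) - m := by
    push_cast [Nat.cast_sub h]; ring
  rw [legendreWeight, legendreWeight, hsub, show n + (m + 1) = (n + m) + 1 by omega,
    Nat.factorial_succ (n + m), Nat.factorial_succ (n - (m + 1)), ← hcast]
  push_cast
  field_simp

noncomputable def legendreTerm (n m : ℕ) : ℝ[X] :=
  C (legendreWeight n m) * (1 - X ^ 2) ^ m * (derivative^[m] (legendrePoly n)) ^ 2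

noncomputable def legendreCrossTerm (n m : ℕ) : ℝ[X] :=
  C (legendreWeight n m) * (1 - X ^ 2) ^ m *
    derivative^[m] (legendrePoly n) * derivative^[m + 1] (legendrePoly n)

theorem derivative_legendreTerm_succ {n m : ℕ} (h : m < n) :
    derivative (legendreTerm n (m + 1)) = legendreCrossTerm n (m + 1) - legendreCrossTerm n m := by
  have hode := one_sub_sq_mul_iterate_derivative_legendrePoly n m
  have hweight := congrArg C (legendreWeight_succ_mul h)
  simp only [C_mul, C_add, C_sub, C_1, C_eq_natCast] at hweight
  simp only [legendreTerm, legendreCrossTerm, derivative_mul, derivative_pow, derivative_sub,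
    derivative_one, derivative_X, derivative_C, ← Function.iterate_succ_apply' derivative,
    Nat.add_sub_cancel, C_eq_natCast]
  push_cast
  linear_combination
    (C (legendreWeight n (m + 1)) * (1 - X ^ 2) ^ m * derivative^[m + 1] (legendrePoly n)) * hode -
      ((1 - X ^ 2) ^ m * derivative^[m] (legendrePoly n) * derivative^[m + 1] (legendrePoly n)) *
        hweight

theorem legendrePoly_sq_add_two_mul_sum_legendreTerm (n : ℕ) :
    legendrePoly n ^ 2 + 2 * ∑ m ∈ range n, legendreTerm n (m + 1) = 1 := by
  have hcross_top : legendreCrossTerm n n = 0 := by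
    rw [legendreCrossTerm, iterate_derivative_legendrePoly_eq_zero, mul_zero]
  have hcross_zero : derivative (legendrePoly n ^ 2) = 2 * legendreCrossTerm n 0 := by
    simp [legendreCrossTerm, legendreWeight_zero, derivative_sq, C_ofNat, mul_assoc]
  have hderiv : derivative (legendrePoly n ^ 2 + 2 * ∑ m ∈ range n, legendreTerm n (m + 1)) = 0 := by
    rw [derivative_add, derivative_mul, derivative_sum,
      Finset.sum_congr rfl fun m hm => derivative_legendreTerm_succ (mem_range.1 hm),
      Finset.sum_range_sub (legendreCrossTerm n), hcross_top, hcross_zero, derivative_ofNat]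
    ring
  have heval : (legendrePoly n ^ 2 + 2 * ∑ m ∈ range n, legendreTerm n (m + 1)).eval 1 = 1 := by
    simp [legendreTerm, legendrePoly_eval_one, eval_finsetSum]
  rw [eq_C_of_derivative_eq_zero hderiv] at heval ⊢
  rw [← C_1, ← heval, eval_C]

theorem legendreTerm_eval_le_one {n m : ℕ} (hm : m ≤ n) {x : ℝ} (hx : x ^ 2 ≤ 1) :
    (legendreTerm n m).eval x ≤ 1 := by
  have hnonneg (k : ℕ) : 0 ≤ (legendreTerm n k).eval x := by
    have : 0 ≤ legendreWeight n k := by unfold legendreWeight; positivity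
    have : 0 ≤ 1 - x ^ 2 := by linarith
    simp only [legendreTerm, eval_mul, eval_pow, eval_C, eval_sub, eval_one, eval_X]
    positivity
  have hidentity := congrArg (eval x) (legendrePoly_sq_add_two_mul_sum_legendreTerm n)
  simp only [eval_add, eval_mul, eval_pow, eval_ofNat, eval_finsetSum, eval_one] at hidentity
  have hsum := Finset.sum_nonneg fun k (_ : k ∈ range n) => hnonneg (k + 1)
  rcases m with _ | k
  · simp only [legendreTerm, legendreWeight_zero, C_1, pow_zero, mul_one, one_mul,
      Function.iterate_zero_apply, eval_pow]
    linarith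
  · have := Finset.single_le_sum (fun k (_ : k ∈ range n) => hnonneg (k + 1))
      (mem_range.2 (Nat.lt_of_succ_le hm))
    nlinarith

theorem legendreFn_eq_eval (n : ℕ) : legendreFn n = fun x => (legendrePoly n).eval x := by
  funext x
  have hpow : (fun y : ℝ => (y ^ 2 - 1) ^ n) = fun y => (((X : ℝ[X]) ^ 2 - 1) ^ n).eval y := by
    simp
  rw [legendreFn, hpow, Polynomial.iteratedDeriv_eval, legendrePoly, eval_mul, eval_C]

theorem legendreWeight_mul_assocLegendre_sq (n m : ℕ) {x : ℝ} (hx : x ^ 2 ≤ 1) :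
    legendreWeight n m * assocLegendre n m x ^ 2 = (legendreTerm n m).eval x := by
  have hrpow : ((1 - x ^ 2) ^ ((m : ℝ) / 2)) ^ 2 = (1 - x ^ 2) ^ m := by
    rw [Real.rpow_div_two_eq_sqrt _ (by linarith), Real.rpow_natCast, ← pow_mul, mul_comm,
      pow_mul, Real.sq_sqrt (by linarith)]
  rw [assocLegendre, legendreFn_eq_eval, Polynomial.iteratedDeriv_eval, mul_pow, mul_pow, hrpow,
    ← pow_mul, mul_comm m 2, pow_mul]
  simp [legendreTerm]
  ring

theorem toNat_factorial_div_mul_assocLegendreZ_sq (n : ℕ) (m : ℤ) (x : ℝ) :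
    (((n - m : ℤ).toNat.factorial : ℝ) / ((n + m : ℤ).toNat.factorial : ℝ)) *
        assocLegendreZ n m x ^ 2 =
      legendreWeight n m.natAbs * assocLegendre n m.natAbs x ^ 2 := by
  rcases le_or_gt 0 m with hm | hm
  · lift m to ℕ using hm
    rw [show ((n : ℤ) - m).toNat = n - m by omega, show ((n : ℤ) + m).toNat = n + m by omega]
    simp [assocLegendreZ, legendreWeight]
  · obtain ⟨k, rfl⟩ : ∃ k : ℕ, m = -k := ⟨m.natAbs, by omega⟩
    rw [show ((n : ℤ) - -k).toNat = n + k by omega, show ((n : ℤ) + -k).toNat = n - k by omega]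
    simp only [assocLegendreZ, legendreWeight, if_neg (not_le.2 hm), neg_neg, Int.toNat_natCast,
      Int.natAbs_neg, Int.natAbs_natCast]
    have hsign : ((-1 : ℝ) ^ k) ^ 2 = 1 := by
      rw [← pow_mul, mul_comm, pow_mul, neg_one_sq, one_pow]
    have : ((n + k).factorial : ℝ) ≠ 0 := by positivity
    have : ((n - k).factorial : ℝ) ≠ 0 := by positivity
    rw [mul_pow, mul_pow, hsign, one_mul]
    field_simp

theorem norm_sphericalHarmonic (n : ℕ) (m : ℤ) (θ φ : ℝ) :
    ‖sphericalHarmonic n m θ φ‖ = √((2 * n + 1) / (4 * π) *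
      (legendreWeight n m.natAbs * assocLegendre n m.natAbs (cos θ) ^ 2)) := by
  have hexp : ‖Complex.exp (Complex.I * m * φ)‖ = 1 := by
    rw [Complex.norm_exp]
    simp
  rw [sphericalHarmonic, norm_mul, norm_mul, hexp, mul_one, Complex.norm_real, Complex.norm_real,
    Real.norm_of_nonneg (Real.sqrt_nonneg _), Real.norm_eq_abs, ← Real.sqrt_sq_eq_abs,
    ← Real.sqrt_mul (by positivity), mul_assoc, toNat_factorial_div_mul_assocLegendreZ_sq]

/-- Uniform bound `‖Y_n^m‖_∞ ≤ √((n+1)/(2π))` on the spherical harmonics. -/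
theorem sphericalHarmonic_abs_le (n : ℕ) (m : ℤ)
    (hm₁ : -(n : ℤ) ≤ m) (hm₂ : m ≤ n) (θ φ : ℝ) :
    ‖sphericalHarmonic n m θ φ‖ ≤ Real.sqrt ((n + 1) / (2 * Real.pi)) := by
  have hterm := legendreTerm_eval_le_one (n := n) (m := m.natAbs) (by omega) (cos_sq_le_one θ)
  rw [← legendreWeight_mul_assocLegendre_sq _ _ (cos_sq_le_one θ)] at hterm
  calc ‖sphericalHarmonic n m θ φ‖
      = √((2 * n + 1) / (4 * π) *
          (legendreWeight n m.natAbs * assocLegendre n m.natAbs (cos θ) ^ 2)) :=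
        norm_sphericalHarmonic n m θ φ
    _ ≤ √((2 * n + 1) / (4 * π) * 1) := by gcongr
    _ ≤ √((n + 1) / (2 * π)) := by
        gcongr
        rw [mul_one, div_le_div_iff₀ (by positivity) (by positivity)]
        nlinarith [pi_pos]
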